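/- arXiv:2509.13423 — 2 statements merged into one kernel-verified Lean document; each statement's English description precedes it below -/
import Mathlib

section
/- Let θ_D ∈ ℝ, α > 1, ε ≥ 0 with |(α−1)θ_D| < π − 2ε. Suppose m_1, m_α ∈ ℝ satisfy m_1 ≡ θ_B + θ_D (mod 2π) up to additive error ε and m_α ≡ θ_B + α·θ_D (mod 2π) up to additive error ε, in the sense that |(m_1 − (θ_B+θ_D))_{(−π,π]}| ≤ ε and |(m_α − (θ_B+α θ_D))_{(−π,π]}| ≤ ε. Then |(m_α − m_1)_{(−π,π]} − (α−1)θ_D| ≤ 2ε, and consequently the estimator θ̂_D := (m_α − m_1)_{(−π,π]}/(α−1) satisfies |θ̂_D − θ_D| ≤ 2ε/(α−1), and θ̂_B := m_1 − θ̂_D satisfies |θ̂_B − θ_B| ≤ ε + 2ε/(α−1) modulo 2π. -/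
/-- Reduction of `x` to the interval `(−π, π]`. -/
noncomputable def redPi (x : ℝ) : ℝ := x - 2*Real.pi * ⌈(x - Real.pi)/(2*Real.pi)⌉

lemma redPi_spec (x : ℝ) : ∃ k : ℤ, x = redPi x + 2*Real.pi*k :=
  ⟨⌈(x - Real.pi)/(2*Real.pi)⌉, by unfold redPi; ring⟩

lemma redPi_mem (x : ℝ) : -Real.pi < redPi x ∧ redPi x ≤ Real.pi := by
  have hπ := Real.pi_pos
  have h2π : (0:ℝ) < 2*Real.pi := by linarith
  set y := (x - Real.pi)/(2*Real.pi) with hy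
  have hle : y ≤ ⌈y⌉ := Int.le_ceil y
  have hlt : (⌈y⌉ : ℝ) < y + 1 := Int.ceil_lt_add_one y
  have hyx : y * (2*Real.pi) = x - Real.pi := div_mul_cancel₀ _ (ne_of_gt h2π)
  constructor
  · unfold redPi
    nlinarith [mul_lt_mul_of_pos_right hlt h2π]
  · unfold redPi
    nlinarith [mul_le_mul_of_nonneg_right hle h2π.le]

lemma redPi_eq_self {x : ℝ} (h1 : -Real.pi < x) (h2 : x ≤ Real.pi) : redPi x = x := by
  have hπ := Real.pi_pos
  have h2π : (0:ℝ) < 2*Real.pi := by linarith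
  have : ⌈(x - Real.pi)/(2*Real.pi)⌉ = 0 := by
    rw [Int.ceil_eq_zero_iff]
    constructor
    · show (-1:ℝ) < _
      rw [lt_div_iff₀ h2π]; linarith
    · show _ ≤ (0:ℝ)
      apply div_nonpos_of_nonpos_of_nonneg <;> linarith
  unfold redPi
  rw [this]; push_cast; ring

lemma redPi_add_int (x : ℝ) (k : ℤ) : redPi (x + 2*Real.pi*k) = redPi x := by
  have hπ := Real.pi_ne_zero
  unfold redPi
  have : (x + 2*Real.pi*k - Real.pi)/(2*Real.pi) = (x - Real.pi)/(2*Real.pi) + k := by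
    field_simp; ring
  rw [this, Int.ceil_add_intCast]
  push_cast; ring

lemma redPi_eq_of {x y : ℝ} (k : ℤ) (hk : x = y + 2*Real.pi*k)
    (h1 : -Real.pi < y) (h2 : y ≤ Real.pi) : redPi x = y := by
  rw [hk, redPi_add_int, redPi_eq_self h1 h2]

/-- Algebraic reconstruction step of the two-speed Berry phase estimation. -/
theorem two_speed_reconstruction (θB θD α ε m1 mα : ℝ)
    (hα : 1 < α) (hε : 0 ≤ ε)
    (hwrap : |(α - 1) * θD| < Real.pi - 2*ε)
    (h1 : |redPi (m1 - (θB + θD))| ≤ ε)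
    (h2 : |redPi (mα - (θB + α*θD))| ≤ ε) :
    |redPi (mα - m1) - (α - 1)*θD| ≤ 2*ε ∧
    |redPi (mα - m1)/(α - 1) - θD| ≤ 2*ε/(α - 1) ∧
    |redPi ((m1 - redPi (mα - m1)/(α - 1)) - θB)| ≤ ε + 2*ε/(α - 1) := by
  have hπ := Real.pi_pos
  set e1 := redPi (m1 - (θB + θD)) with he1
  set e2 := redPi (mα - (θB + α*θD)) with he2
  obtain ⟨k1, hk1⟩ := redPi_spec (m1 - (θB + θD))
  obtain ⟨k2, hk2⟩ := redPi_spec (mα - (θB + α*θD))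
  rw [← he1] at hk1; rw [← he2] at hk2
  have he1' := abs_le.mp h1
  have he2' := abs_le.mp h2
  have habs := abs_lt.mp hwrap
  set v := (α-1)*θD + e2 - e1 with hv
  have hvlt : -Real.pi < v := by linarith
  have hvle : v ≤ Real.pi := by linarith
  have hred : redPi (mα - m1) = v := by
    apply redPi_eq_of (k2 - k1)
    · push_cast; linarith
    · exact hvlt
    · exact hvle
  have hα1 : (0:ℝ) < α - 1 := by linarith
  have c1 : |redPi (mα - m1) - (α - 1)*θD| ≤ 2*ε := by
    rw [hred, abs_le]; constructor <;> [skip; skip] <;> simp only [hv] <;> linarith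
  refine ⟨c1, ?_, ?_⟩
  · have : redPi (mα - m1)/(α - 1) - θD = (redPi (mα - m1) - (α-1)*θD)/(α-1) := by
      field_simp
    rw [this, abs_div, abs_of_pos hα1]
    gcongr
  · set w := θD + e1 - v/(α-1) with hw
    have hwb : |w| ≤ ε + 2*ε/(α-1) := by
      have hvd : v/(α-1) - θD = (e2 - e1)/(α-1) := by rw [hv]; field_simp; ring
      have : w = e1 - (v/(α-1) - θD) := by rw [hw]; ring
      rw [this, hvd]
      have h3 : |(e2 - e1)/(α-1)| ≤ 2*ε/(α-1) := by
        rw [abs_div, abs_of_pos hα1]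
        gcongr
        calc |e2 - e1| ≤ |e2| + |e1| := abs_sub _ _
          _ ≤ 2*ε := by linarith
      calc |e1 - (e2-e1)/(α-1)| ≤ |e1| + |(e2-e1)/(α-1)| := abs_sub _ _
        _ ≤ ε + 2*ε/(α-1) := add_le_add h1 h3
    rw [hred]
    clear_value e1 e2 v w
    by_cases hb : ε + 2*ε/(α-1) < Real.pi
    · have hwlt : -Real.pi < w := by
        have := abs_le.mp hwb; linarith
      have hwle : w ≤ Real.pi := by
        have := abs_le.mp hwb; linarith
      have : redPi ((m1 - v/(α-1)) - θB) = w := by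
        apply redPi_eq_of k1
        · rw [hw]; linear_combination hk1
        · exact hwlt
        · exact hwle
      rw [this]; exact hwb
    · push_neg at hb
      have := (redPi_mem ((m1 - v/(α-1)) - θB))
      rw [abs_le]; constructor <;> [linarith [this.1]; linarith [this.2]]
end

section
/- For T, M ∈ ℕ, let {|t⟩ : 0 ≤ t ≤ T+M} be an orthonormal family, let {W_t}_{t=0}^{T+M} be unitaries on ℂ^{2^n} with W_t = I for t ≥ T, set |ψ_hist⟩ = (T+M+1)^{−1/2} Σ_{t=0}^{T+M} W_t W_{t−1}···W_1|0^n⟩ ⊗ |t⟩ and |c⟩ = W_T···W_1|0^n⟩ ⊗ (M+1)^{−1/2} Σ_{t=T}^{T+M}|t⟩. Then ⟨c|ψ_hist⟩ = √((M+1)/(T+M+1)); in particular |⟨c|ψ_hist⟩|² = (M+1)/(T+M+1) ≥ 1 − T/(T+M+1). -/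
/-!
Since `W t = 1` for `t > T`, the computational part of the history state is the constant `φ T`
on the last `M + 1` clock values, which is exactly the support of `c`; there both states are
multiples of the unit vector `φ T`. The overlap is therefore
`(M + 1) / (√(M + 1) * √(T + M + 1)) = √((M + 1) / (T + M + 1))`.
-/

open Finset

theorem Fin.card_filter_le_val (n m : ℕ) : #{i : Fin n | m ≤ (i : ℕ)} = n - m := by
  have h := card_filter_add_card_filter_not (s := univ) (fun i : Fin n => (i : ℕ) < m)
  simp only [card_filter_val_lt, not_lt, card_univ, Fintype.card_fin] at h
  omega

theorem eq_of_le_of_succ_eq {α : Type*} {f : ℕ → α} {T : ℕ} (h : ∀ t, T ≤ t → f (t + 1) = f t)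
    {t : ℕ} (ht : T ≤ t) : f t = f T := by
  induction t, ht using Nat.le_induction with
  | base => rfl
  | succ k hk ih => rw [h k hk, ih]

theorem PiLp.inner_eq_card_mul_of_ite {ι 𝕜 E : Type*} [Fintype ι] [RCLike 𝕜]
    [NormedAddCommGroup E] [InnerProductSpace 𝕜 E] (p : ι → Prop) [DecidablePred p]
    {x y : PiLp 2 (fun _ : ι => E)} {u v : E} (hx : ∀ i, x i = if p i then u else 0)
    (hy : ∀ i, p i → y i = v) :
    inner 𝕜 x y = #{i | p i} * inner 𝕜 u v := by
  have hterm : ∀ i, inner 𝕜 (x i) (y i) = if p i then inner 𝕜 u v else 0 := fun i => by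
    by_cases hi : p i <;> simp [hx i, hi, hy]
  rw [PiLp.inner_apply, Fintype.sum_congr _ _ hterm, ← sum_filter, sum_const, nsmul_eq_mul]

theorem Real.div_sqrt_mul_sqrt (a : ℝ) {b : ℝ} (hb : 0 ≤ b) : a / (√a * √b) = √(a / b) := by
  rw [← div_div, Real.div_sqrt, Real.sqrt_div' _ hb]

/-- The clock register is modelled by functions `Fin (T+M+1) → ℂ^(2^n)`: `φ ⊗ |t⟩` is the function
supported at `t` with value `φ`. -/
theorem history_state_overlap (n T M : ℕ)
    (W : ℕ → (EuclideanSpace ℂ (Fin (2^n)) →ₗᵢ[ℂ] EuclideanSpace ℂ (Fin (2^n))))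
    (hW : ∀ t, T < t → ∀ x, W t x = x)
    (φ : ℕ → EuclideanSpace ℂ (Fin (2^n)))
    (hφ0 : ‖φ 0‖ = 1)
    (hrec : ∀ t, φ (t+1) = W (t+1) (φ t))
    (hist c : PiLp 2 (fun _ : Fin (T+M+1) => EuclideanSpace ℂ (Fin (2^n))))
    (hhist : ∀ t : Fin (T+M+1),
      hist t = ((Real.sqrt ((T:ℝ)+M+1) : ℂ))⁻¹ • φ (t:ℕ))
    (hc : ∀ t : Fin (T+M+1),
      c t = if T ≤ (t:ℕ) then ((Real.sqrt ((M:ℝ)+1) : ℂ))⁻¹ • φ T else 0) :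
    (inner ℂ c hist : ℂ) = (Real.sqrt (((M:ℝ)+1)/((T:ℝ)+M+1)) : ℝ) ∧
    ‖(inner ℂ c hist : ℂ)‖^2 = ((M:ℝ)+1)/((T:ℝ)+M+1) := by
  have hidle : ∀ t, T ≤ t → φ t = φ T :=
    fun t => eq_of_le_of_succ_eq fun k hk => by rw [hrec k, hW (k + 1) (by omega)]
  have hnorm : ‖φ T‖ = 1 :=
    hφ0 ▸ eq_of_le_of_succ_eq (f := fun t => ‖φ t‖) (fun k _ => by simp [hrec k]) T.zero_le
  have hoverlap : inner ℂ c hist = (((M + 1 : ℝ) / (√(M + 1) * √(T + M + 1)) : ℝ) : ℂ) := by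
    rw [PiLp.inner_eq_card_mul_of_ite _ hc (fun t ht => by rw [hhist t, hidle t ht]),
      Fin.card_filter_le_val, inner_smul_left, inner_smul_right, inner_self_eq_norm_sq_to_K,
      hnorm]
    push_cast
    rw [show T + M + 1 - T = M + 1 by omega]
    simp [Complex.conj_ofReal, div_eq_mul_inv, mul_comm]
  have hsqrt : (M + 1 : ℝ) / (√(M + 1) * √(T + M + 1)) = √((M + 1) / (T + M + 1)) :=
    Real.div_sqrt_mul_sqrt _ (by positivity)
  rw [hoverlap, hsqrt, Complex.norm_real, Real.norm_eq_abs, sq_abs, Real.sq_sqrt (by positivity)]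
  exact ⟨rfl, rfl⟩
end
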